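/- For w ∈ (0,1], the sequence n ↦ B_n(w)/n! is log-concave, and consequently for all n ≥ 2, 0 ≤ B_{n-2}(w)/B_{n-1}(w) − B_{n-1}(w)/B_n(w) ≤ (1/(n-1)) · B_{n-1}(w)/B_n(w). -/

import Mathlib

open Finset

/-- Number of intra-block pairs of a set partition. -/
def partWeight {n : ℕ} (P : Finpartition (Finset.univ : Finset (Fin n))) : ℕ :=
  ∑ S ∈ P.parts, (S.card).choose 2

/-- The generalized Bell number `B_n(w) = ∑_P ∏_{S block of P} w^{C(|S|,2)}`. -/
noncomputable def genBell (n : ℕ) (w : ℝ) : ℝ :=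
  ∑ P : Finpartition (Finset.univ : Finset (Fin n)), ∏ S ∈ P.parts, w ^ (S.card).choose 2

/-- The Bell number: number of set partitions of an `n`-element set. -/
noncomputable def Bell (n : ℕ) : ℕ := Nat.card (Finpartition (Finset.univ : Finset (Fin n)))

open scoped Nat

/-!
Grouping the partitions of `[n+1]` by the block containing a fixed element gives
`B_{n+1} = ∑ⱼ C(n,j) w^C(j+1,2) B_{n-j}`. Hence `aₙ = Bₙ/n!` satisfies `(n+1) aₙ₊₁ = ∑ cⱼ aₙ₋ⱼ`
with `cⱼ = w^C(j+1,2)/j!`: the logarithmic derivative of `∑ aₙ xⁿ` is `∑ cⱼ xʲ`. For `0 < w ≤ 1`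
the sequence `1 = c₀, c₁ = w, c₂, …` is log-concave, and a theorem of Bender and Canfield then makes
`a` log-concave, which is the upper bound. Its proof is an induction in which the cross terms pair
up into products of `2 × 2` minors of `c` and of `a` of the same sign. Log-concavity of `a`,
fed back into the recurrence, also gives `(n+1) aₙ₊₁² ≤ (n+2) aₙ aₙ₊₂`,
i.e. `B_{n+1}² ≤ Bₙ B_{n+2}`, which is the lower bound.
-/

namespace Finpartition

theorem parts_avoid_of_mem {α : Type*} [GeneralizedBooleanAlgebra α] [DecidableEq α] {a b : α}
    (P : Finpartition a) (hb : b ∈ P.parts) : (P.avoid b).parts = P.parts.erase b := by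
  ext c
  rw [mem_avoid, mem_erase]
  constructor
  · rintro ⟨d, hd, hdb, rfl⟩
    have hdb' : d ≠ b := by rintro rfl; exact hdb le_rfl
    have hdisj : Disjoint d b := P.disjoint hd hb hdb'
    rw [hdisj.sdiff_eq_left]
    exact ⟨hdb', hd⟩
  · rintro ⟨hcb, hc⟩
    have hdisj : Disjoint c b := P.disjoint hc hb hcb
    exact ⟨c, hc, fun hle => P.ne_bot hc (hdisj.eq_bot_of_le hle), hdisj.sdiff_eq_left⟩

variable {α R : Type*} [DecidableEq α] [CommSemiring R]

/-- Removing the block `insert a t` is a bijection onto the partitions of `s \ t`. -/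
theorem sum_prod_parts_of_part_erase_eq {a : α} {s t : Finset α} (ha : a ∉ s) (ht : t ⊆ s)
    (g : Finset α → R) :
    ∑ P : Finpartition (insert a s) with (P.part a).erase a = t, ∏ S ∈ P.parts, g S
      = g (insert a t) * ∑ Q : Finpartition (s \ t), ∏ S ∈ Q.parts, g S := by
  set b := insert a t
  have hat : a ∉ t := fun h => ha (ht h)
  have hb : b ≠ ⊥ := insert_ne_empty a t
  have hdisj : Disjoint (s \ t) b :=
    disjoint_insert_right.2 ⟨fun h => ha (mem_sdiff.1 h).1, sdiff_disjoint⟩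
  have hsup : s \ t ⊔ b = insert a s := by
    rw [sup_eq_union, union_insert, sdiff_union_of_subset ht]
  have hdiff : insert a s \ b = s \ t := by
    rw [insert_sdiff_insert, sdiff_insert_of_notMem ha]
  have hfiber : ∀ P : Finpartition (insert a s), (P.part a).erase a = t → b ∈ P.parts := by
    intro P hP
    change insert a t ∈ P.parts
    rw [← hP, insert_erase (P.mem_part_self.2 (mem_insert_self a s))]
    exact P.part_mem.2 (mem_insert_self a s)
  have hb_notMem : ∀ Q : Finpartition (s \ t), b ∉ Q.parts := fun Q hbQ =>
    ha (mem_sdiff.1 (Q.le hbQ (mem_insert_self a t))).1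
  have hb_mem : ∀ Q : Finpartition (s \ t), b ∈ (Q.extend hb hdisj hsup).parts := fun Q =>
    mem_insert_self b Q.parts
  rw [mul_sum]
  refine sum_nbij' (fun P => (P.avoid b).copy hdiff) (fun Q => Q.extend hb hdisj hsup)
    (fun _ _ => mem_univ _) (fun Q _ => ?_) (fun P hP => ?_) (fun Q _ => ?_) (fun P hP => ?_)
  · rw [mem_filter, part_eq_of_mem _ (hb_mem Q) (mem_insert_self a t), erase_insert hat]
    exact ⟨mem_univ _, rfl⟩
  · refine Finpartition.ext ?_
    rw [extend_parts, copy_parts, parts_avoid_of_mem _ (hfiber P (mem_filter.1 hP).2),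
      insert_erase (hfiber P (mem_filter.1 hP).2)]
  · refine Finpartition.ext ?_
    rw [copy_parts, parts_avoid_of_mem _ (hb_mem Q), extend_parts, erase_insert (hb_notMem Q)]
  · rw [copy_parts, parts_avoid_of_mem _ (hfiber P (mem_filter.1 hP).2),
      mul_prod_erase _ _ (hfiber P (mem_filter.1 hP).2)]

theorem sum_prod_parts_insert {a : α} {s : Finset α} (ha : a ∉ s) (g : Finset α → R) :
    ∑ P : Finpartition (insert a s), ∏ S ∈ P.parts, g S
      = ∑ t ∈ s.powerset, g (insert a t) * ∑ Q : Finpartition (s \ t), ∏ S ∈ Q.parts, g S := by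
  have hmaps : ∀ P ∈ (univ : Finset (Finpartition (insert a s))),
      (P.part a).erase a ∈ s.powerset := by
    intro P _
    rw [mem_powerset, ← subset_insert_iff]
    exact P.part_subset a
  rw [← sum_fiberwise_of_maps_to hmaps]
  exact sum_congr rfl fun t ht => sum_prod_parts_of_part_erase_eq ha (mem_powerset.1 ht) g

end Finpartition

section GenBellOn

variable {α : Type*} [DecidableEq α]

noncomputable def genBellOn (s : Finset α) (w : ℝ) : ℝ :=
  ∑ P : Finpartition s, ∏ S ∈ P.parts, w ^ (#S).choose 2

theorem genBellOn_empty (w : ℝ) : genBellOn (∅ : Finset α) w = 1 := by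
  rw [genBellOn, ← bot_eq_empty, Fintype.sum_unique, Finpartition.default_eq_empty,
    Finpartition.empty_parts, prod_empty]

theorem genBellOn_eq_sum_antidiagonal {s : Finset α} {n : ℕ} (hs : #s = n + 1) (w : ℝ)
    (F : ℕ → ℝ) (hF : ∀ u ⊂ s, genBellOn u w = F #u) :
    genBellOn s w = ∑ p ∈ antidiagonal n, n.choose p.1 * w ^ (p.1 + 1).choose 2 * F p.2 := by
  obtain ⟨a, ha⟩ : s.Nonempty := card_pos.1 (by omega)
  have hcard : #(s.erase a) = n := by rw [card_erase_of_mem ha, hs, Nat.add_sub_cancel]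
  have hterm : ∀ t ∈ (s.erase a).powerset,
      w ^ (#(insert a t)).choose 2 * genBellOn (s.erase a \ t) w
        = w ^ (#t + 1).choose 2 * F (n - #t) := by
    intro t ht
    have hts := mem_powerset.1 ht
    rw [card_insert_of_notMem fun h => notMem_erase a s (hts h),
      hF _ ((sdiff_subset).trans_ssubset (erase_ssubset ha)), card_sdiff_of_subset hts, hcard]
  rw [← insert_erase ha, genBellOn, Finpartition.sum_prod_parts_insert (notMem_erase a s)]
  refine (sum_congr rfl hterm).trans ?_
  rw [sum_powerset_apply_card (fun j => w ^ (j + 1).choose 2 * F (n - j)),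
    hcard, Nat.sum_antidiagonal_eq_sum_range_succ
      (fun i j => n.choose i * w ^ (i + 1).choose 2 * F j)]
  simp only [nsmul_eq_mul, mul_assoc]

end GenBellOn

/-- The induction runs over all types at once, since its step compares `s` with
`univ : Finset (Fin (m + 1))`. -/
theorem genBellOn_eq_genBell_card {α : Type} [DecidableEq α] (s : Finset α) (w : ℝ) :
    genBellOn s w = genBell #s w := by
  suffices h : ∀ n (β : Type) [DecidableEq β] (s : Finset β), #s = n → genBellOn s w = genBell n w
    from h _ α s rfl
  intro n
  induction n using Nat.strong_induction_on with
  | _ n ih =>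
  intro β _ s hs
  rcases n with _ | m
  · rw [card_eq_zero.1 hs, genBellOn_empty]
    exact (genBellOn_empty w).symm
  · have hF : ∀ (γ : Type) [DecidableEq γ] (u v : Finset γ), u ⊂ v → #v = m + 1 →
        genBellOn u w = genBell #u w := fun γ _ u v huv hv =>
      ih _ (hv ▸ card_lt_card huv) γ u rfl
    rw [genBellOn_eq_sum_antidiagonal hs w (genBell · w) fun u hu => hF β u s hu hs]
    exact (genBellOn_eq_sum_antidiagonal (card_fin (m + 1)) w (genBell · w)
      fun u hu => hF _ u _ hu (card_fin (m + 1))).symm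

theorem genBell_succ (n : ℕ) (w : ℝ) :
    genBell (n + 1) w
      = ∑ p ∈ antidiagonal n, n.choose p.1 * w ^ (p.1 + 1).choose 2 * genBell p.2 w :=
  genBellOn_eq_sum_antidiagonal (card_fin (n + 1)) w (genBell · w)
    fun u _ => genBellOn_eq_genBell_card u w

theorem mul_succ_le_succ_mul_of_logConcave {f : ℕ → ℝ} {N : ℕ} (hpos : ∀ i, 0 < f i)
    (hf : ∀ i < N, f i * f (i + 2) ≤ f (i + 1) ^ 2) {p q : ℕ} (hpq : p ≤ q) (hqN : q ≤ N) :
    f p * f (q + 1) ≤ f (p + 1) * f q := by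
  induction q, hpq using Nat.le_induction with
  | base => rw [mul_comm]
  | succ q hpq ih =>
    have hprod := mul_le_mul (ih (by omega)) (hf q (by omega))
      (mul_nonneg (hpos q).le (hpos _).le) (mul_nonneg (hpos _).le (hpos q).le)
    have hqq : 0 < f q * f (q + 1) := mul_pos (hpos q) (hpos _)
    refine le_of_mul_le_mul_right ?_ hqq
    calc f p * f (q + 1 + 1) * (f q * f (q + 1)) = f p * f (q + 1) * (f q * f (q + 2)) := by ring
      _ ≤ f (p + 1) * f q * f (q + 1) ^ 2 := hprod
      _ = f (p + 1) * f (q + 1) * (f q * f (q + 1)) := by ring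

theorem sum_sum_nonneg_of_add_swap_nonneg {ι : Type*} (s : Finset ι) (D : ι → ι → ℝ)
    (h : ∀ x ∈ s, ∀ y ∈ s, 0 ≤ D x y + D y x) : 0 ≤ ∑ x ∈ s, ∑ y ∈ s, D x y := by
  have hsymm : ∑ x ∈ s, ∑ y ∈ s, (D x y + D y x) = 2 * ∑ x ∈ s, ∑ y ∈ s, D x y := by
    simp only [sum_add_distrib]
    rw [sum_comm (f := fun x y => D y x)]
    ring
  linarith [sum_nonneg fun x hx => sum_nonneg fun y hy => h x hx y hy]

/-- The difference of the two sides is `∑ x, ∑ y, D x y` where `D x y + D y x` is a `2 × 2` minor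
of `u` times one of `v`; these have the same sign since `x.1 ≤ y.1 ↔ y.2 ≤ x.2`. -/
theorem sum_antidiagonal_mul_sum_le {u v : ℕ → ℝ} {N : ℕ}
    (hu : ∀ p q, p ≤ q → q ≤ N → u p * u (q + 1) ≤ u (p + 1) * u q)
    (hv : ∀ p q, p ≤ q → q ≤ N → v p * v (q + 1) ≤ v (p + 1) * v q) :
    (∑ x ∈ antidiagonal N, u (x.1 + 1) * v (x.2 + 1)) * (∑ x ∈ antidiagonal N, u x.1 * v x.2)
      ≤ (∑ x ∈ antidiagonal N, u x.1 * v (x.2 + 1)) *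
        (∑ x ∈ antidiagonal N, u (x.1 + 1) * v x.2) := by
  rw [← sub_nonneg, sum_mul_sum, sum_mul_sum, ← sum_sub_distrib]
  simp_rw [← sum_sub_distrib]
  refine sum_sum_nonneg_of_add_swap_nonneg _ _ fun x hx y hy => ?_
  rw [HasAntidiagonal.mem_antidiagonal] at hx hy
  have hswap :
      u x.1 * v (x.2 + 1) * (u (y.1 + 1) * v y.2) - u (x.1 + 1) * v (x.2 + 1) * (u y.1 * v y.2)
        + (u y.1 * v (y.2 + 1) * (u (x.1 + 1) * v x.2)
          - u (y.1 + 1) * v (y.2 + 1) * (u x.1 * v x.2))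
      = (u (x.1 + 1) * u y.1 - u x.1 * u (y.1 + 1))
        * (v (y.2 + 1) * v x.2 - v y.2 * v (x.2 + 1)) := by
    ring
  rw [hswap]
  rcases le_total x.1 y.1 with hxy | hyx
  · exact mul_nonneg (sub_nonneg.2 (hu _ _ hxy (by omega)))
      (sub_nonneg.2 (hv _ _ (by omega) (by omega)))
  · exact mul_nonneg_of_nonpos_of_nonpos (sub_nonpos.2 (by linarith [hu _ _ hyx (by omega)]))
      (sub_nonpos.2 (by linarith [hv _ _ (by omega : x.2 ≤ y.2) (by omega)]))

/-- The power series `∑ aₙ Xⁿ` has logarithmic derivative `∑ cₖ Xᵏ`. -/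
def HasLogDeriv (a c : ℕ → ℝ) : Prop :=
  ∀ n : ℕ, (n + 1 : ℝ) * a (n + 1) = ∑ p ∈ antidiagonal n, c p.1 * a p.2

namespace HasLogDeriv

variable {a c : ℕ → ℝ}

theorem pos (h : HasLogDeriv a c) (ha : 0 < a 0) (hc0 : 0 < c 0) (hc : ∀ k, 0 ≤ c k) (n : ℕ) :
    0 < a n := by
  induction n using Nat.strong_induction_on with
  | _ n ih =>
  rcases n with _ | n
  · exact ha
  · have hsum : 0 < ∑ p ∈ antidiagonal n, c p.1 * a p.2 := by
      refine sum_pos' (fun p hp => mul_nonneg (hc _) (ih _ ?_).le) ⟨(0, n), by simp, ?_⟩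
      · rw [HasAntidiagonal.mem_antidiagonal] at hp; omega
      · exact mul_pos hc0 (ih n n.lt_succ_self)
    rw [← h n] at hsum
    exact pos_of_mul_pos_right hsum (by positivity)

theorem antitone (h : HasLogDeriv a c) (ha : ∀ n, 0 ≤ a n) (hc0 : c 0 = 1) (hc : Antitone c) :
    Antitone a := by
  refine antitone_nat_of_succ_le fun n => ?_
  rcases n with _ | n
  · simpa [hc0] using (h 0).le
  · have hshift : ∑ p ∈ antidiagonal n, c (p.1 + 1) * a p.2 ≤ ∑ p ∈ antidiagonal n, c p.1 * a p.2 :=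
      sum_le_sum fun p _ => mul_le_mul_of_nonneg_right (hc p.1.le_succ) (ha _)
    have hsucc := h (n + 1)
    simp only [Nat.sum_antidiagonal_succ, hc0, one_mul] at hsucc
    push_cast at hsucc
    nlinarith [h n, ha (n + 1)]

theorem mul_add_mul_le_sq (h : HasLogDeriv a c) (ha : ∀ n, 0 ≤ a n) (hc0 : c 0 = 1)
    (hc : ∀ p q, p ≤ q → c p * c (q + 1) ≤ c (p + 1) * c q) {m : ℕ}
    (ham : ∀ p q, p ≤ q → q ≤ m → a p * a (q + 1) ≤ a (p + 1) * a q) :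
    ((m : ℝ) + 3) * a (m + 3) * (((m : ℝ) + 1) * a (m + 1)) + a (m + 2) * a (m + 1)
      ≤ (((m : ℝ) + 2) * a (m + 2)) ^ 2 := by
  set Y := ∑ p ∈ antidiagonal m, c p.1 * a p.2
  set U := ∑ p ∈ antidiagonal m, c (p.1 + 1) * a p.2
  set T := ∑ p ∈ antidiagonal (m + 1), c (p.1 + 1) * a p.2
  have h3 : ((m : ℝ) + 3) * a (m + 3) = a (m + 2) + T := by
    have := h (m + 2); rw [Nat.sum_antidiagonal_succ, hc0, one_mul] at this
    push_cast at this; linarith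
  have h2 : ((m : ℝ) + 2) * a (m + 2) = a (m + 1) + U := by
    have := h (m + 1); rw [Nat.sum_antidiagonal_succ, hc0, one_mul] at this
    push_cast at this; linarith
  have h2' : ((m : ℝ) + 2) * a (m + 2) = ∑ p ∈ antidiagonal (m + 1), c p.1 * a p.2 := by
    have := h (m + 1); push_cast at this; linarith
  have h1 : ((m : ℝ) + 1) * a (m + 1) = Y := h m
  have hcross : T * Y ≤ ((m : ℝ) + 2) * a (m + 2) * U := by
    have hboundary : c (m + 1 + 1) * a 0 * Y ≤ c (m + 1) * a 0 * U := by
      simp only [Y, U, mul_sum]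
      refine sum_le_sum fun p hp => ?_
      rw [HasAntidiagonal.mem_antidiagonal] at hp
      have := hc p.1 (m + 1) (by omega)
      have := mul_nonneg (ha 0) (ha p.2)
      nlinarith
    have hsquare := sum_antidiagonal_mul_sum_le (fun p q hpq _ => hc p q hpq) ham
    have hT : T = c (m + 1 + 1) * a 0 + ∑ p ∈ antidiagonal m, c (p.1 + 1) * a (p.2 + 1) := by
      simp only [T, Nat.sum_antidiagonal_succ']
    rw [h2', Nat.sum_antidiagonal_succ', hT, add_mul, add_mul]
    exact add_le_add hboundary hsquare
  calc ((m : ℝ) + 3) * a (m + 3) * (((m : ℝ) + 1) * a (m + 1)) + a (m + 2) * a (m + 1)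
      = ((m : ℝ) + 2) * a (m + 2) * a (m + 1) + T * Y := by rw [h3, ← h1]; ring
    _ ≤ ((m : ℝ) + 2) * a (m + 2) * a (m + 1) + ((m : ℝ) + 2) * a (m + 2) * U := by gcongr
    _ = (((m : ℝ) + 2) * a (m + 2)) ^ 2 := by rw [sq]; nth_rw 3 [h2]; ring

/-- A theorem of Bender and Canfield. -/
theorem logConcave (h : HasLogDeriv a c) (ha : 0 < a 0) (hc_pos : ∀ k, 0 < c k) (hc0 : c 0 = 1)
    (hc1 : c 1 ≤ 1) (hc : ∀ k, c k * c (k + 2) ≤ c (k + 1) ^ 2) (n : ℕ) :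
    a n * a (n + 2) ≤ a (n + 1) ^ 2 := by
  have hc_ratio : ∀ p q, p ≤ q → c p * c (q + 1) ≤ c (p + 1) * c q := fun p q hpq =>
    mul_succ_le_succ_mul_of_logConcave hc_pos (fun i _ => hc i) hpq le_rfl
  have hc_anti : Antitone c := antitone_nat_of_succ_le fun k => by
    have := hc_ratio 0 k k.zero_le
    rw [hc0, one_mul] at this
    exact this.trans (mul_le_of_le_one_left (hc_pos k).le hc1)
  have ha_pos := h.pos ha (hc0 ▸ one_pos) fun k => (hc_pos k).le
  have ha_anti := h.antitone (fun n => (ha_pos n).le) hc0 hc_anti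
  induction n using Nat.strong_induction_on with
  | _ n ih =>
  rcases n with _ | m
  · have h1 : a 1 = a 0 := by simpa [hc0] using h 0
    rw [sq, h1]
    exact mul_le_mul_of_nonneg_left (h1 ▸ ha_anti (Nat.le_succ 1)) (ha_pos 0).le
  · have hkey := h.mul_add_mul_le_sq (fun n => (ha_pos n).le) hc0 hc_ratio
      fun p q hpq hq => mul_succ_le_succ_mul_of_logConcave ha_pos ih hpq (hq.trans m.le_succ)
    have hdec : a (m + 3) * a (m + 1) ≤ a (m + 2) * a (m + 1) :=
      mul_le_mul_of_nonneg_right (ha_anti (Nat.le_succ _)) (ha_pos _).le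
    have hm : (0 : ℝ) < ((m : ℝ) + 2) ^ 2 := by positivity
    refine le_of_mul_le_mul_left ?_ hm
    nlinarith

theorem succ_mul_sq_le (h : HasLogDeriv a c) (ha_pos : ∀ n, 0 < a n) (hc : ∀ k, 0 ≤ c k)
    (ha : ∀ n, a n * a (n + 2) ≤ a (n + 1) ^ 2) (n : ℕ) :
    ((n : ℝ) + 1) * a (n + 1) ^ 2 ≤ ((n : ℝ) + 2) * (a n * a (n + 2)) := by
  have hratio : ∀ p ∈ antidiagonal n, c p.1 * a p.2 * a (n + 1) ≤ c p.1 * a (p.2 + 1) * a n := by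
    intro p hp
    rw [HasAntidiagonal.mem_antidiagonal] at hp
    have := mul_succ_le_succ_mul_of_logConcave ha_pos (fun i _ => ha i) (by omega : p.2 ≤ n) le_rfl
    rw [mul_assoc, mul_assoc]
    exact mul_le_mul_of_nonneg_left this (hc _)
  have hsucc := h (n + 1)
  rw [Nat.sum_antidiagonal_succ'] at hsucc
  push_cast at hsucc
  have hlast : 0 ≤ c (n + 1) * a 0 * a n :=
    mul_nonneg (mul_nonneg (hc _) (ha_pos 0).le) (ha_pos n).le
  calc ((n : ℝ) + 1) * a (n + 1) ^ 2 = (∑ p ∈ antidiagonal n, c p.1 * a p.2) * a (n + 1) := by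
        rw [← h n, sq]; ring
    _ ≤ (∑ p ∈ antidiagonal n, c p.1 * a (p.2 + 1)) * a n := by
        rw [sum_mul, sum_mul]; exact sum_le_sum hratio
    _ ≤ ((n : ℝ) + 2) * (a n * a (n + 2)) := by
        rw [show ((n : ℝ) + 2) * (a n * a (n + 2)) = (n + 1 + 1) * a (n + 1 + 1) * a n by ring,
          hsucc, add_mul]
        linarith

end HasLogDeriv

theorem logConcave_pow_choose_div_factorial {w : ℝ} (hw : w ∈ Set.Ioc (0 : ℝ) 1) (k : ℕ) :
    w ^ (k + 1).choose 2 / k ! * (w ^ (k + 3).choose 2 / (k + 2)!)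
      ≤ (w ^ (k + 2).choose 2 / (k + 1)!) ^ 2 := by
  have hexp : (k + 1).choose 2 + (k + 3).choose 2 = 2 * (k + 2).choose 2 + 1 := by
    have h2 : (k + 2).choose 2 = k + 1 + (k + 1).choose 2 := by
      simpa using Nat.choose_succ_succ' (k + 1) 1
    have h3 : (k + 3).choose 2 = k + 2 + (k + 2).choose 2 := by
      simpa using Nat.choose_succ_succ' (k + 2) 1
    omega
  have hfact : ((k + 1)! : ℝ) ^ 2 ≤ k ! * (k + 2)! := by
    have : (k + 1)! ^ 2 ≤ k ! * (k + 2)! := by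
      rw [Nat.factorial_succ (k + 1), Nat.factorial_succ k]
      nlinarith [k.factorial_pos]
    exact_mod_cast this
  rw [div_mul_div_comm, ← pow_add, hexp, div_pow, ← pow_mul, mul_comm ((k + 2).choose 2) 2]
  exact div_le_div₀ (pow_nonneg hw.1.le _) (pow_le_pow_of_le_one hw.1.le hw.2 (by omega))
    (by positivity) hfact

theorem hasLogDeriv_genBell (w : ℝ) :
    HasLogDeriv (fun n => genBell n w / n !) (fun k => w ^ (k + 1).choose 2 / k !) := by
  intro n
  have hterm : ∀ p ∈ antidiagonal n, w ^ (p.1 + 1).choose 2 / p.1 ! * (genBell p.2 w / p.2 !)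
      = n.choose p.1 * w ^ (p.1 + 1).choose 2 * genBell p.2 w / n ! := by
    intro p hp
    rw [HasAntidiagonal.mem_antidiagonal] at hp
    subst hp
    rw [Nat.cast_add_choose]
    field_simp
  rw [sum_congr rfl hterm, ← sum_div, ← genBell_succ]
  dsimp only
  rw [Nat.factorial_succ]
  push_cast
  field_simp

theorem genBell_zero (w : ℝ) : genBell 0 w = 1 := by
  rw [← genBellOn_empty (α := Fin 0) w, genBellOn_eq_genBell_card, card_empty]

section

variable {w : ℝ} (hw : w ∈ Set.Ioc (0 : ℝ) 1)
include hw

theorem genBell_div_factorial_mul_le (n : ℕ) :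
    genBell n w / n ! * (genBell (n + 2) w / (n + 2)!) ≤ (genBell (n + 1) w / (n + 1)!) ^ 2 :=
  (hasLogDeriv_genBell w).logConcave (by simp [genBell_zero]) (fun k => by have := hw.1; positivity)
    (by simp) (by simpa using hw.2) (logConcave_pow_choose_div_factorial hw) n

theorem genBell_pos (n : ℕ) : 0 < genBell n w := by
  have := (hasLogDeriv_genBell w).pos (by simp [genBell_zero]) (by simp)
    (fun k => by have := hw.1; positivity) n
  exact (div_pos_iff_of_pos_right (by positivity)).1 this

theorem genBell_sq_le_mul (n : ℕ) : genBell (n + 1) w ^ 2 ≤ genBell n w * genBell (n + 2) w := by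
  set a : ℕ → ℝ := fun k => genBell k w / (k ! : ℝ)
  have hB : ∀ k, genBell k w = k ! * a k := fun k => by simp only [a]; field_simp
  have h := (hasLogDeriv_genBell w).succ_mul_sq_le
    (fun k => div_pos (genBell_pos hw k) (by positivity)) (fun k => by have := hw.1; positivity)
    (genBell_div_factorial_mul_le hw) n
  rw [hB, hB, hB, Nat.factorial_succ (n + 1), Nat.factorial_succ n]
  push_cast
  calc ((n + 1) * n ! * a (n + 1)) ^ 2
      = (n + 1) * (n ! : ℝ) ^ 2 * ((n + 1) * a (n + 1) ^ 2) := by ring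
    _ ≤ (n + 1) * (n ! : ℝ) ^ 2 * ((n + 2) * (a n * a (n + 2))) := by gcongr
    _ = n ! * a n * ((n + 1 + 1) * ((n + 1) * n !) * a (n + 2)) := by ring

theorem succ_mul_genBell_mul_le (n : ℕ) :
    ((n : ℝ) + 1) * (genBell n w * genBell (n + 2) w) ≤ ((n : ℝ) + 2) * genBell (n + 1) w ^ 2 := by
  set a : ℕ → ℝ := fun k => genBell k w / (k ! : ℝ)
  have hB : ∀ k, genBell k w = k ! * a k := fun k => by simp only [a]; field_simp
  have h : a n * a (n + 2) ≤ a (n + 1) ^ 2 := genBell_div_factorial_mul_le hw n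
  rw [hB, hB, hB, Nat.factorial_succ (n + 1), Nat.factorial_succ n]
  push_cast
  calc ((n : ℝ) + 1) * (n ! * a n * ((n + 1 + 1) * ((n + 1) * n !) * a (n + 2)))
      = (n + 2) * (n + 1) ^ 2 * (n ! : ℝ) ^ 2 * (a n * a (n + 2)) := by ring
    _ ≤ (n + 2) * (n + 1) ^ 2 * (n ! : ℝ) ^ 2 * a (n + 1) ^ 2 := by gcongr
    _ = (n + 2) * ((n + 1) * n ! * a (n + 1)) ^ 2 := by ring

end

/-- for `w ∈ (0,1]`, `n ↦ B_n(w)/n!` is log-concave, and consequently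
`0 ≤ B_{n-2}(w)/B_{n-1}(w) − B_{n-1}(w)/B_n(w) ≤ (1/(n-1)) · B_{n-1}(w)/B_n(w)` for `n ≥ 2`. -/
theorem genBell_div_factorial_log_concave (w : ℝ) (hw : w ∈ Set.Ioc (0 : ℝ) 1) :
    (∀ n : ℕ, 1 ≤ n →
      genBell (n - 1) w / (n - 1).factorial * (genBell (n + 1) w / (n + 1).factorial)
        ≤ (genBell n w / n.factorial) ^ 2) ∧
    (∀ n : ℕ, 2 ≤ n →
      0 ≤ genBell (n - 2) w / genBell (n - 1) w - genBell (n - 1) w / genBell n w ∧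
      genBell (n - 2) w / genBell (n - 1) w - genBell (n - 1) w / genBell n w
        ≤ 1 / ((n : ℝ) - 1) * (genBell (n - 1) w / genBell n w)) := by
  refine ⟨fun n hn => ?_, fun n hn => ?_⟩
  · obtain ⟨m, rfl⟩ := Nat.exists_eq_add_of_le' hn
    exact genBell_div_factorial_mul_le hw m
  · obtain ⟨m, rfl⟩ := Nat.exists_eq_add_of_le' hn
    have hcast : ((m + 2 : ℕ) : ℝ) - 1 = m + 1 := by push_cast; ring
    rw [Nat.add_sub_cancel, show m + 2 - 1 = m + 1 from rfl, hcast]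
    have h0 := genBell_pos hw m
    have h1 := genBell_pos hw (m + 1)
    have h2 := genBell_pos hw (m + 2)
    constructor
    · rw [sub_nonneg, div_le_div_iff₀ h2 h1]
      nlinarith [genBell_sq_le_mul hw m]
    · field_simp
      nlinarith [succ_mul_genBell_mul_le hw m]
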